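/- arXiv:1809.06433 — 3 statements merged into one kernel-verified Lean document; each statement's English description precedes it below -/
import Mathlib

section
/- Let B be any real number. If x ⊆ E is a maximal matching of the graph G̃ = G̃(X,Y), then F_U(x) = 0 and F_V(x) = 0, and consequently H(x) = F_c(x) = C(x), the cost of the matching x. -/
open Finset

/-- Points of the plane `ℝ²`. -/
abbrev Pt : Type := ℝ × ℝ

/-- Vertices of the bipartite graph `G̃(X,Y)`: `Sum.inl z` represents the off-diagonal
point `z`, and `Sum.inr z` represents the diagonal vertex `Δ_z`, tagged by its source
point `z` (so distinct points give distinct diagonal vertices, as in `U = X ⊔ Δ_Y`,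
`V = Y ⊔ Δ_X`). -/
abbrev Vtx : Type := Pt ⊕ Pt

/-- Diagonal projection `Δ_z = ((c+d)/2, (c+d)/2)` for `z = (c,d)`. -/
noncomputable def diagProj (z : Pt) : Pt := ((z.1 + z.2) / 2, (z.1 + z.2) / 2)

/-- The point of `ℝ²` represented by a vertex. -/
noncomputable def pos : Vtx → Pt
  | Sum.inl z => z
  | Sum.inr z => diagProj z

/-- The edge set `E` of `G̃(X,Y)`: all pairs `(a, b)` with `a ∈ X`, `b ∈ Y`, together
with the pendant edges `(a, Δ_a)` for `a ∈ X` and `(Δ_b, b)` for `b ∈ Y`.  First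
components are vertices of `U = X ⊔ Δ_Y`, second components vertices of `V = Y ⊔ Δ_X`. -/
noncomputable def edges (X Y : Finset Pt) : Finset (Vtx × Vtx) :=
  ((X ×ˢ Y).image fun ab => ((Sum.inl ab.1, Sum.inl ab.2) : Vtx × Vtx)) ∪
    (X.image fun a => ((Sum.inl a, Sum.inr a) : Vtx × Vtx)) ∪
    (Y.image fun b => ((Sum.inr b, Sum.inl b) : Vtx × Vtx))

/-- A matching: each (left or right) vertex is adjacent to at most one edge of `x`. -/
def IsMatching (x : Finset (Vtx × Vtx)) : Prop :=
  ∀ e ∈ x, ∀ e' ∈ x, e ≠ e' → e.1 ≠ e'.1 ∧ e.2 ≠ e'.2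

/-- A maximal matching among the subsets of the edge set `E`: a matching not properly
contained in another matching. -/
def IsMaximalMatching (E x : Finset (Vtx × Vtx)) : Prop :=
  x ⊆ E ∧ IsMatching x ∧ ∀ y, y ⊆ E → IsMatching y → x ⊆ y → x = y

/-- The `ℓ_q` norm of a vector of `ℝ²`. -/
noncomputable def lqNorm (q : ℝ) (z : Pt) : ℝ := (|z.1| ^ q + |z.2| ^ q) ^ (1 / q)

/-- The edge weight `ω(u,v) = ‖u − v‖_q^p`. -/
noncomputable def edgeWeight (p q : ℝ) (u v : Vtx) : ℝ := lqNorm q (pos u - pos v) ^ p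

/-- The cost of a matching, `C(x) = Σ_{e ∈ x} ω(e)`. -/
noncomputable def cost (p q : ℝ) (x : Finset (Vtx × Vtx)) : ℝ :=
  ∑ e ∈ x, edgeWeight p q e.1 e.2

/-- `F_c(x) = Σ_{(u,v) ∈ E} ω(u,v) · x_{u,v}`, identifying a subset `x ⊆ E` with its
indicator vector in `{0,1}^E`. -/
noncomputable def Fc (p q : ℝ) (E x : Finset (Vtx × Vtx)) : ℝ :=
  ∑ e ∈ E, edgeWeight p q e.1 e.2 * (if e ∈ x then 1 else 0)

/-- `F_U(x) = B · Σ_{u ∈ X} (1 − Σ_{v : (u,v) ∈ E} x_{u,v})²`. -/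
noncomputable def FU (B : ℝ) (X : Finset Pt) (E x : Finset (Vtx × Vtx)) : ℝ :=
  B * ∑ u ∈ X,
    (1 - ∑ e ∈ E.filter (fun e => e.1 = Sum.inl u), (if e ∈ x then (1 : ℝ) else 0)) ^ 2

/-- `F_V(x) = B · Σ_{v ∈ Y} (1 − Σ_{u : (u,v) ∈ E} x_{u,v})²`. -/
noncomputable def FV (B : ℝ) (Y : Finset Pt) (E x : Finset (Vtx × Vtx)) : ℝ :=
  B * ∑ v ∈ Y,
    (1 - ∑ e ∈ E.filter (fun e => e.2 = Sum.inl v), (if e ∈ x then (1 : ℝ) else 0)) ^ 2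

/-- The QUBO Hamiltonian `H = F_c + F_U + F_V` for the graph `G̃(X,Y)`. -/
noncomputable def Ham (B p q : ℝ) (X Y : Finset Pt) (x : Finset (Vtx × Vtx)) : ℝ :=
  Fc p q (edges X Y) x + FU B X (edges X Y) x + FV B Y (edges X Y) x

lemma mem_edges {X Y : Finset Pt} {e : Vtx × Vtx} :
    e ∈ edges X Y ↔ (∃ a ∈ X, ∃ b ∈ Y, e = (Sum.inl a, Sum.inl b)) ∨
      (∃ a ∈ X, e = (Sum.inl a, Sum.inr a)) ∨ (∃ b ∈ Y, e = (Sum.inr b, Sum.inl b)) := by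
  simp [edges, Finset.mem_union, Finset.mem_image, Finset.mem_product, Prod.ext_iff, and_assoc, eq_comm]

lemma exu_left {X Y : Finset Pt} {x : Finset (Vtx × Vtx)}
    (hx : IsMaximalMatching (edges X Y) x) {u : Pt} (hu : u ∈ X) :
    ∃! e, e ∈ x ∧ e.1 = Sum.inl u := by
  obtain ⟨hsub, hmatch, hmax⟩ := hx
  have hex : ∃ e ∈ x, e.1 = Sum.inl u := by
    by_contra h
    push_neg at h
    set e₀ : Vtx × Vtx := (Sum.inl u, Sum.inr u) with he₀
    have he₀E : e₀ ∈ edges X Y := mem_edges.mpr (Or.inr (Or.inl ⟨u, hu, rfl⟩))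
    have he₀x : e₀ ∉ x := fun h' => (h e₀ h') rfl
    have hmy : IsMatching (insert e₀ x) := by
      intro e he e' he' hne
      rcases Finset.mem_insert.1 he with rfl | he <;>
        rcases Finset.mem_insert.1 he' with rfl | he'
      · exact absurd rfl hne
      · constructor
        · exact fun h1 => h e' he' h1.symm
        · intro h2
          rcases mem_edges.1 (hsub he') with ⟨a, _, b, _, rfl⟩ | ⟨a, _, rfl⟩ | ⟨b, _, rfl⟩
          · exact Sum.inr_ne_inl h2
          · exact h _ he' (by simpa using (Sum.inr_injective (h2 : (Sum.inr u : Vtx) = Sum.inr a)) ▸ rfl)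
          · exact Sum.inr_ne_inl h2
      · constructor
        · exact fun h1 => h e he h1
        · intro h2
          rcases mem_edges.1 (hsub he) with ⟨a, _, b, _, rfl⟩ | ⟨a, _, rfl⟩ | ⟨b, _, rfl⟩
          · exact Sum.inl_ne_inr h2
          · exact h _ he (by simpa using (Sum.inr_injective (h2.symm : (Sum.inr u : Vtx) = Sum.inr a)) ▸ rfl)
          · exact Sum.inl_ne_inr h2
      · exact hmatch e he e' he' hne
    have := hmax (insert e₀ x) (Finset.insert_subset he₀E hsub) hmy (Finset.subset_insert _ _)
    exact he₀x (this ▸ Finset.mem_insert_self e₀ x)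
  obtain ⟨e, he, he1⟩ := hex
  refine ⟨e, ⟨he, he1⟩, ?_⟩
  intro e' ⟨he', he'1⟩
  by_contra hne
  exact (hmatch e' he' e he hne).1 (he'1.trans he1.symm)

lemma exu_right {X Y : Finset Pt} {x : Finset (Vtx × Vtx)}
    (hx : IsMaximalMatching (edges X Y) x) {v : Pt} (hv : v ∈ Y) :
    ∃! e, e ∈ x ∧ e.2 = Sum.inl v := by
  obtain ⟨hsub, hmatch, hmax⟩ := hx
  have hex : ∃ e ∈ x, e.2 = Sum.inl v := by
    by_contra h
    push_neg at h
    set e₀ : Vtx × Vtx := (Sum.inr v, Sum.inl v) with he₀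
    have he₀E : e₀ ∈ edges X Y := mem_edges.mpr (Or.inr (Or.inr ⟨v, hv, rfl⟩))
    have he₀x : e₀ ∉ x := fun h' => (h e₀ h') rfl
    have hmy : IsMatching (insert e₀ x) := by
      intro e he e' he' hne
      rcases Finset.mem_insert.1 he with rfl | he <;>
        rcases Finset.mem_insert.1 he' with rfl | he'
      · exact absurd rfl hne
      · constructor
        · intro h1
          rcases mem_edges.1 (hsub he') with ⟨a, _, b, _, rfl⟩ | ⟨a, _, rfl⟩ | ⟨b, _, rfl⟩
          · exact Sum.inr_ne_inl h1
          · exact Sum.inr_ne_inl h1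
          · exact h _ he' (by simpa using (Sum.inr_injective (h1 : (Sum.inr v : Vtx) = Sum.inr b)) ▸ rfl)
        · exact fun h2 => h e' he' h2.symm
      · constructor
        · intro h1
          rcases mem_edges.1 (hsub he) with ⟨a, _, b, _, rfl⟩ | ⟨a, _, rfl⟩ | ⟨b, _, rfl⟩
          · exact Sum.inl_ne_inr h1
          · exact Sum.inl_ne_inr h1
          · exact h _ he (by simpa using (Sum.inr_injective (h1.symm : (Sum.inr v : Vtx) = Sum.inr b)) ▸ rfl)
        · exact fun h2 => h e he h2
      · exact hmatch e he e' he' hne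
    have := hmax (insert e₀ x) (Finset.insert_subset he₀E hsub) hmy (Finset.subset_insert _ _)
    exact he₀x (this ▸ Finset.mem_insert_self e₀ x)
  obtain ⟨e, he, he2⟩ := hex
  refine ⟨e, ⟨he, he2⟩, ?_⟩
  intro e' ⟨he', he'2⟩
  by_contra hne
  exact (hmatch e' he' e he hne).2 (he'2.trans he2.symm)


/-- For any real `B`, if `x ⊆ E` is a maximal matching of
`G̃ = G̃(X,Y)` then `F_U(x) = 0` and `F_V(x) = 0`, and consequently
`H(x) = F_c(x) = C(x)`, the cost of the matching `x`. -/
theorem maximal_matching_H_eq_cost (B p q : ℝ) (hp : 1 ≤ p) (hq : 1 ≤ q)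
    (X Y : Finset Pt) (hX : ∀ z ∈ X, z.1 < z.2) (hY : ∀ z ∈ Y, z.1 < z.2)
    (x : Finset (Vtx × Vtx)) (hx : IsMaximalMatching (edges X Y) x) :
    FU B X (edges X Y) x = 0 ∧ FV B Y (edges X Y) x = 0 ∧
      Ham B p q X Y x = Fc p q (edges X Y) x ∧
      Fc p q (edges X Y) x = cost p q x := by
  obtain ⟨hsub, hmatch, hmax⟩ := hx
  have hxE : (edges X Y).filter (· ∈ x) = x :=
    (Finset.filter_mem_eq_inter).trans (Finset.inter_eq_right.mpr hsub)
  have hsumU : ∀ u ∈ X,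
      ∑ e ∈ (edges X Y).filter (fun e => e.1 = Sum.inl u), (if e ∈ x then (1:ℝ) else 0) = 1 := by
    intro u hu
    obtain ⟨e₀, ⟨he₀x, he₀1⟩, huniq⟩ := exu_left ⟨hsub, hmatch, hmax⟩ hu
    rw [Finset.sum_boole]
    have : ((edges X Y).filter (fun e => e.1 = Sum.inl u)).filter (· ∈ x) = {e₀} := by
      ext e
      simp only [Finset.mem_filter, Finset.mem_singleton]
      constructor
      · rintro ⟨⟨_, h1⟩, h2⟩
        exact huniq e ⟨h2, h1⟩
      · rintro rfl
        exact ⟨⟨hsub he₀x, he₀1⟩, he₀x⟩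
    rw [this]
    simp
  have hsumV : ∀ v ∈ Y,
      ∑ e ∈ (edges X Y).filter (fun e => e.2 = Sum.inl v), (if e ∈ x then (1:ℝ) else 0) = 1 := by
    intro v hv
    obtain ⟨e₀, ⟨he₀x, he₀2⟩, huniq⟩ := exu_right ⟨hsub, hmatch, hmax⟩ hv
    rw [Finset.sum_boole]
    have : ((edges X Y).filter (fun e => e.2 = Sum.inl v)).filter (· ∈ x) = {e₀} := by
      ext e
      simp only [Finset.mem_filter, Finset.mem_singleton]
      constructor
      · rintro ⟨⟨_, h1⟩, h2⟩
        exact huniq e ⟨h2, h1⟩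
      · rintro rfl
        exact ⟨⟨hsub he₀x, he₀2⟩, he₀x⟩
    rw [this]
    simp
  have hFU : FU B X (edges X Y) x = 0 := by
    unfold FU
    rw [Finset.sum_congr rfl fun u hu => by rw [hsumU u hu]]
    simp
  have hFV : FV B Y (edges X Y) x = 0 := by
    unfold FV
    rw [Finset.sum_congr rfl fun v hv => by rw [hsumV v hv]]
    simp
  have hFc : Fc p q (edges X Y) x = cost p q x := by
    unfold Fc cost
    simp_rw [mul_ite, mul_one, mul_zero]
    rw [← Finset.sum_filter, hxE]
  exact ⟨hFU, hFV, by unfold Ham; rw [hFU, hFV]; ring, hFc⟩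
end

section
/- Assume the genericity condition and B > B*. If x ⊆ E is not a matching of G̃, then there exists a proper subset y ⊊ x which is a matching of G̃ and satisfies H(y) < H(x). -/
open Finset

/-! ### Auxiliary lemmas -/

lemma edges_cases {X Y : Finset Pt} {e : Vtx × Vtx} (he : e ∈ edges X Y) :
    (∃ a ∈ X, ∃ b ∈ Y, e = (Sum.inl a, Sum.inl b)) ∨
    (∃ a ∈ X, e = (Sum.inl a, Sum.inr a)) ∨ (∃ b ∈ Y, e = (Sum.inr b, Sum.inl b)) := by
  simp only [edges, mem_union, mem_image, mem_product] at he
  rcases he with (⟨⟨a,b⟩, ⟨ha, hb⟩, h⟩ | ⟨a, ha, h⟩) | ⟨b, hb, h⟩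
  · exact Or.inl ⟨a, ha, b, hb, h.symm⟩
  · exact Or.inr (Or.inl ⟨a, ha, h.symm⟩)
  · exact Or.inr (Or.inr ⟨b, hb, h.symm⟩)

lemma lqNorm_pos {q : ℝ} (hq : 1 ≤ q) {z : Pt} (hz : z ≠ 0) : 0 < lqNorm q z := by
  have h1 : 0 ≤ |z.1| ^ q := Real.rpow_nonneg (abs_nonneg _) _
  have h2 : 0 ≤ |z.2| ^ q := Real.rpow_nonneg (abs_nonneg _) _
  have : 0 < |z.1| ^ q + |z.2| ^ q := by
    by_cases h1' : z.1 = 0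
    · have h2' : z.2 ≠ 0 := fun h => hz (Prod.ext_iff.mpr ⟨h1', h⟩)
      have := Real.rpow_pos_of_pos (abs_pos.mpr h2') q
      linarith
    · have := Real.rpow_pos_of_pos (abs_pos.mpr h1') q
      linarith
  exact Real.rpow_pos_of_pos this _

lemma edgeWeight_pos {p q : ℝ} (hq : 1 ≤ q) {X Y : Finset Pt}
    (hX : ∀ z ∈ X, z.1 < z.2) (hY : ∀ z ∈ Y, z.1 < z.2)
    (hgen : ∀ a ∈ X, ∀ b ∈ Y, a ≠ b) {e : Vtx × Vtx} (he : e ∈ edges X Y) :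
    0 < edgeWeight p q e.1 e.2 := by
  have key : pos e.1 - pos e.2 ≠ 0 := by
    rcases edges_cases he with ⟨a, ha, b, hb, rfl⟩ | ⟨a, ha, rfl⟩ | ⟨b, hb, rfl⟩
    · simp only [pos]
      exact sub_ne_zero_of_ne (hgen a ha b hb)
    · simp only [pos]
      intro h
      have := hX a ha
      have h1 : a.1 - (diagProj a).1 = 0 := by rw [← Prod.fst_sub, h]; simp
      simp only [diagProj] at h1
      linarith
    · simp only [pos]
      intro h
      have := hY b hb
      have h1 : (diagProj b).1 - b.1 = 0 := by rw [← Prod.fst_sub, h]; simp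
      simp only [diagProj] at h1
      linarith
  exact Real.rpow_pos_of_pos (lqNorm_pos hq key) p

lemma indsum {E x : Finset (Vtx × Vtx)} (hx : x ⊆ E) (P : Vtx × Vtx → Prop)
    [DecidablePred P] :
    ∑ e ∈ E.filter P, (if e ∈ x then (1 : ℝ) else 0) = ((x.filter P).card : ℝ) := by
  rw [Finset.sum_ite_mem, Finset.sum_const, nsmul_eq_mul, mul_one]
  congr 2
  ext f
  simp only [mem_inter, mem_filter]
  exact ⟨fun ⟨⟨_, h2⟩, h3⟩ => ⟨h3, h2⟩, fun ⟨h1, h2⟩ => ⟨⟨hx h1, h2⟩, h1⟩⟩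

lemma Fc_eq {p q : ℝ} {E x : Finset (Vtx × Vtx)} (hx : x ⊆ E) :
    Fc p q E x = ∑ e ∈ x, edgeWeight p q e.1 e.2 := by
  unfold Fc
  simp only [mul_ite, mul_one, mul_zero]
  rw [Finset.sum_ite_mem, Finset.inter_eq_right.mpr hx]

lemma Fc_erase {p q : ℝ} {E x : Finset (Vtx × Vtx)} (hx : x ⊆ E) {e : Vtx × Vtx}
    (he : e ∈ x) :
    Fc p q E (x.erase e) = Fc p q E x - edgeWeight p q e.1 e.2 := by
  rw [Fc_eq ((Finset.erase_subset _ _).trans hx), Fc_eq hx, Finset.sum_erase_eq_sub he]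

lemma FU_erase_inl (B : ℝ) (X : Finset Pt) (E x : Finset (Vtx × Vtx)) (hx : x ⊆ E)
    {e : Vtx × Vtx} (he : e ∈ x) {a : Pt} (ha : a ∈ X) (hea : e.1 = Sum.inl a) :
    FU B X E (x.erase e) = FU B X E x +
      B * ((2 - ((x.filter (fun f => f.1 = Sum.inl a)).card : ℝ)) ^ 2
         - (1 - ((x.filter (fun f => f.1 = Sum.inl a)).card : ℝ)) ^ 2) := by
  have hxe : x.erase e ⊆ E := (Finset.erase_subset _ _).trans hx
  unfold FU
  simp only [indsum hx, indsum hxe]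
  rw [← Finset.add_sum_erase X _ ha, ← Finset.add_sum_erase X
    (fun u => (1 - ((x.filter (fun f => f.1 = Sum.inl u)).card : ℝ)) ^ 2) ha]
  have hoff : ∀ u ∈ X.erase a,
      (x.erase e).filter (fun f => f.1 = Sum.inl u) = x.filter (fun f => f.1 = Sum.inl u) := by
    intro u hu
    rw [Finset.filter_erase]
    exact Finset.erase_eq_of_notMem (by
      simp only [mem_filter, hea, not_and]
      intro _ h
      exact (Finset.ne_of_mem_erase hu) (by injection h with h'; exact h'.symm))
  rw [Finset.sum_congr rfl (fun u hu => by rw [hoff u hu])]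
  have hmem : e ∈ x.filter (fun f => f.1 = Sum.inl a) := mem_filter.mpr ⟨he, hea⟩
  have hca : (((x.erase e).filter (fun f => f.1 = Sum.inl a)).card : ℝ) + 1 =
      ((x.filter (fun f => f.1 = Sum.inl a)).card : ℝ) := by
    rw [Finset.filter_erase, Finset.card_erase_of_mem hmem]
    have : 1 ≤ (x.filter (fun f => f.1 = Sum.inl a)).card := Finset.card_pos.mpr ⟨e, hmem⟩
    push_cast [Nat.cast_sub this]
    ring
  set c' := (((x.erase e).filter (fun f => f.1 = Sum.inl a)).card : ℝ)
  set c := ((x.filter (fun f => f.1 = Sum.inl a)).card : ℝ)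
  have : c' = c - 1 := by linarith
  rw [this]
  ring

lemma FU_erase_inr (B : ℝ) (X : Finset Pt) (E x : Finset (Vtx × Vtx)) (hx : x ⊆ E)
    {e : Vtx × Vtx} {z : Pt} (hez : e.1 = Sum.inr z) :
    FU B X E (x.erase e) = FU B X E x := by
  have hxe : x.erase e ⊆ E := (Finset.erase_subset _ _).trans hx
  unfold FU
  simp only [indsum hx, indsum hxe]
  congr 1
  refine Finset.sum_congr rfl (fun u _ => ?_)
  rw [Finset.filter_erase, Finset.erase_eq_of_notMem (by simp [hez])]

lemma FV_erase_inl (B : ℝ) (Y : Finset Pt) (E x : Finset (Vtx × Vtx)) (hx : x ⊆ E)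
    {e : Vtx × Vtx} (he : e ∈ x) {b : Pt} (hb : b ∈ Y) (heb : e.2 = Sum.inl b) :
    FV B Y E (x.erase e) = FV B Y E x +
      B * ((2 - ((x.filter (fun f => f.2 = Sum.inl b)).card : ℝ)) ^ 2
         - (1 - ((x.filter (fun f => f.2 = Sum.inl b)).card : ℝ)) ^ 2) := by
  have hxe : x.erase e ⊆ E := (Finset.erase_subset _ _).trans hx
  unfold FV
  simp only [indsum hx, indsum hxe]
  rw [← Finset.add_sum_erase Y _ hb, ← Finset.add_sum_erase Y
    (fun v => (1 - ((x.filter (fun f => f.2 = Sum.inl v)).card : ℝ)) ^ 2) hb]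
  have hoff : ∀ v ∈ Y.erase b,
      (x.erase e).filter (fun f => f.2 = Sum.inl v) = x.filter (fun f => f.2 = Sum.inl v) := by
    intro v hv
    rw [Finset.filter_erase]
    exact Finset.erase_eq_of_notMem (by
      simp only [mem_filter, heb, not_and]
      intro _ h
      exact (Finset.ne_of_mem_erase hv) (by injection h with h'; exact h'.symm))
  rw [Finset.sum_congr rfl (fun v hv => by rw [hoff v hv])]
  have hmem : e ∈ x.filter (fun f => f.2 = Sum.inl b) := mem_filter.mpr ⟨he, heb⟩
  have hca : (((x.erase e).filter (fun f => f.2 = Sum.inl b)).card : ℝ) + 1 =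
      ((x.filter (fun f => f.2 = Sum.inl b)).card : ℝ) := by
    rw [Finset.filter_erase, Finset.card_erase_of_mem hmem]
    have : 1 ≤ (x.filter (fun f => f.2 = Sum.inl b)).card := Finset.card_pos.mpr ⟨e, hmem⟩
    push_cast [Nat.cast_sub this]
    ring
  set c' := (((x.erase e).filter (fun f => f.2 = Sum.inl b)).card : ℝ)
  set c := ((x.filter (fun f => f.2 = Sum.inl b)).card : ℝ)
  have : c' = c - 1 := by linarith
  rw [this]
  ring

lemma FV_erase_inr (B : ℝ) (Y : Finset Pt) (E x : Finset (Vtx × Vtx)) (hx : x ⊆ E)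
    {e : Vtx × Vtx} {z : Pt} (hez : e.2 = Sum.inr z) :
    FV B Y E (x.erase e) = FV B Y E x := by
  have hxe : x.erase e ⊆ E := (Finset.erase_subset _ _).trans hx
  unfold FV
  simp only [indsum hx, indsum hxe]
  congr 1
  refine Finset.sum_congr rfl (fun v _ => ?_)
  rw [Finset.filter_erase, Finset.erase_eq_of_notMem (by simp [hez])]

/-- Structural facts about first/second components of edges. -/
lemma fst_inr {X Y : Finset Pt} {e : Vtx × Vtx} (he : e ∈ edges X Y) {z : Pt}
    (h : e.1 = Sum.inr z) : e = (Sum.inr z, Sum.inl z) := by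
  rcases edges_cases he with ⟨a, _, b, _, rfl⟩ | ⟨a, _, rfl⟩ | ⟨b, _, rfl⟩ <;>
    simp_all

lemma snd_inr {X Y : Finset Pt} {e : Vtx × Vtx} (he : e ∈ edges X Y) {z : Pt}
    (h : e.2 = Sum.inr z) : e = (Sum.inl z, Sum.inr z) := by
  rcases edges_cases he with ⟨a, _, b, _, rfl⟩ | ⟨a, _, rfl⟩ | ⟨b, _, rfl⟩ <;>
    simp_all

lemma fst_inl_mem {X Y : Finset Pt} {e : Vtx × Vtx} (he : e ∈ edges X Y) {a : Pt}
    (h : e.1 = Sum.inl a) : a ∈ X := by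
  rcases edges_cases he with ⟨a', ha', b, _, rfl⟩ | ⟨a', ha', rfl⟩ | ⟨b, _, rfl⟩ <;>
    simp_all

lemma snd_inl_mem {X Y : Finset Pt} {e : Vtx × Vtx} (he : e ∈ edges X Y) {b : Pt}
    (h : e.2 = Sum.inl b) : b ∈ Y := by
  rcases edges_cases he with ⟨a, _, b', hb', rfl⟩ | ⟨a, _, rfl⟩ | ⟨b', hb', rfl⟩ <;>
    simp_all

/-- Removing a conflicting edge strictly decreases the Hamiltonian. -/
lemma Ham_erase_lt (B p q : ℝ) (hq : 1 ≤ q) (X Y : Finset Pt)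
    (hX : ∀ z ∈ X, z.1 < z.2) (hY : ∀ z ∈ Y, z.1 < z.2)
    (hgen : ∀ a ∈ X, ∀ b ∈ Y, a ≠ b)
    (hB : ∀ e ∈ edges X Y, edgeWeight p q e.1 e.2 < B)
    (x : Finset (Vtx × Vtx)) (hx : x ⊆ edges X Y)
    {e e' : Vtx × Vtx} (he : e ∈ x) (he' : e' ∈ x) (hne : e ≠ e')
    (hsh : e.1 = e'.1 ∨ e.2 = e'.2) :
    Ham B p q X Y (x.erase e) < Ham B p q X Y x := by
  have hωpos : 0 < edgeWeight p q e.1 e.2 := edgeWeight_pos hq hX hY hgen (hx he)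
  have hωB : edgeWeight p q e.1 e.2 < B := hB e (hx he)
  have hB0 : 0 < B := lt_trans hωpos hωB
  unfold Ham
  rw [Fc_erase hx he]
  rcases hsh with hsh | hsh
  · -- shared first vertex
    obtain ⟨a, hea⟩ : ∃ a, e.1 = Sum.inl a := by
      rcases h1 : e.1 with a | z
      · exact ⟨a, rfl⟩
      · exfalso
        have heq : e = (Sum.inr z, Sum.inl z) := fst_inr (hx he) h1
        have heq' : e' = (Sum.inr z, Sum.inl z) := fst_inr (hx he') (by rw [← hsh, h1])
        exact hne (heq.trans heq'.symm)
    have haX : a ∈ X := fst_inl_mem (hx he) hea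
    have hd2 : 2 ≤ ((x.filter (fun f => f.1 = Sum.inl a)).card : ℝ) := by
      have : 1 < (x.filter (fun f => f.1 = Sum.inl a)).card := Finset.one_lt_card.mpr
        ⟨e, mem_filter.mpr ⟨he, hea⟩, e', mem_filter.mpr ⟨he', by rw [← hsh, hea]⟩, hne⟩
      exact_mod_cast this
    rw [FU_erase_inl B X _ x hx he haX hea]
    rcases h2 : e.2 with b | z
    · rw [h2] at hωpos hωB
      have hbY : b ∈ Y := snd_inl_mem (hx he) h2
      have hdV1 : 1 ≤ ((x.filter (fun f => f.2 = Sum.inl b)).card : ℝ) := by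
        have : 0 < (x.filter (fun f => f.2 = Sum.inl b)).card :=
          Finset.card_pos.mpr ⟨e, mem_filter.mpr ⟨he, h2⟩⟩
        exact_mod_cast this
      rw [FV_erase_inl B Y _ x hx he hbY h2]
      nlinarith [mul_nonpos_of_nonneg_of_nonpos hB0.le
        (show 6 - 2 * ((x.filter (fun f => f.1 = Sum.inl a)).card : ℝ)
          - 2 * ((x.filter (fun f => f.2 = Sum.inl b)).card : ℝ) ≤ 0 by linarith)]
    · rw [h2] at hωpos hωB
      rw [FV_erase_inr B Y _ x hx h2]
      nlinarith [mul_nonpos_of_nonneg_of_nonpos hB0.le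
        (show 3 - 2 * ((x.filter (fun f => f.1 = Sum.inl a)).card : ℝ) ≤ 0 by linarith)]
  · -- shared second vertex
    obtain ⟨b, heb⟩ : ∃ b, e.2 = Sum.inl b := by
      rcases h2 : e.2 with b | z
      · exact ⟨b, rfl⟩
      · exfalso
        have heq : e = (Sum.inl z, Sum.inr z) := snd_inr (hx he) h2
        have heq' : e' = (Sum.inl z, Sum.inr z) := snd_inr (hx he') (by rw [← hsh, h2])
        exact hne (heq.trans heq'.symm)
    have hbY : b ∈ Y := snd_inl_mem (hx he) heb
    have hd2 : 2 ≤ ((x.filter (fun f => f.2 = Sum.inl b)).card : ℝ) := by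
      have : 1 < (x.filter (fun f => f.2 = Sum.inl b)).card := Finset.one_lt_card.mpr
        ⟨e, mem_filter.mpr ⟨he, heb⟩, e', mem_filter.mpr ⟨he', by rw [← hsh, heb]⟩, hne⟩
      exact_mod_cast this
    rw [FV_erase_inl B Y _ x hx he hbY heb]
    rcases h1 : e.1 with a | z
    · rw [h1] at hωpos hωB
      have haX : a ∈ X := fst_inl_mem (hx he) h1
      have hdU1 : 1 ≤ ((x.filter (fun f => f.1 = Sum.inl a)).card : ℝ) := by
        have : 0 < (x.filter (fun f => f.1 = Sum.inl a)).card :=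
          Finset.card_pos.mpr ⟨e, mem_filter.mpr ⟨he, h1⟩⟩
        exact_mod_cast this
      rw [FU_erase_inl B X _ x hx he haX h1]
      nlinarith [mul_nonpos_of_nonneg_of_nonpos hB0.le
        (show 6 - 2 * ((x.filter (fun f => f.2 = Sum.inl b)).card : ℝ)
          - 2 * ((x.filter (fun f => f.1 = Sum.inl a)).card : ℝ) ≤ 0 by linarith)]
    · rw [h1] at hωpos hωB
      rw [FU_erase_inr B X _ x hx h1]
      nlinarith [mul_nonpos_of_nonneg_of_nonpos hB0.le
        (show 3 - 2 * ((x.filter (fun f => f.2 = Sum.inl b)).card : ℝ) ≤ 0 by linarith)]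

lemma main_aux (B p q : ℝ) (hq : 1 ≤ q) (X Y : Finset Pt)
    (hX : ∀ z ∈ X, z.1 < z.2) (hY : ∀ z ∈ Y, z.1 < z.2)
    (hgen : ∀ a ∈ X, ∀ b ∈ Y, a ≠ b)
    (hB : ∀ e ∈ edges X Y, edgeWeight p q e.1 e.2 < B) :
    ∀ n (x : Finset (Vtx × Vtx)), x.card ≤ n → x ⊆ edges X Y → ¬ IsMatching x →
      ∃ y, y ⊂ x ∧ IsMatching y ∧ Ham B p q X Y y < Ham B p q X Y x := by
  intro n
  induction n with
  | zero =>
    intro x hc _ hnm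
    have hx0 : x = ∅ := Finset.card_eq_zero.mp (Nat.le_zero.mp hc)
    subst hx0
    exact absurd (fun e he => absurd he (by simp)) hnm
  | succ n ih =>
    intro x hc hxE hnm
    unfold IsMatching at hnm
    push_neg at hnm
    obtain ⟨e, he, e', he', hne, hsh⟩ := hnm
    have hsh' : e.1 = e'.1 ∨ e.2 = e'.2 := by
      by_cases h : e.1 = e'.1
      · exact Or.inl h
      · exact Or.inr (hsh h)
    have hstep := Ham_erase_lt B p q hq X Y hX hY hgen hB x hxE he he' hne hsh'
    have hsub : x.erase e ⊂ x := Finset.erase_ssubset he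
    by_cases hm : IsMatching (x.erase e)
    · exact ⟨x.erase e, hsub, hm, hstep⟩
    · have hcard : (x.erase e).card ≤ n := by
        rw [Finset.card_erase_of_mem he]
        omega
      obtain ⟨y, hy1, hy2, hy3⟩ := ih (x.erase e)
        hcard ((Finset.erase_subset _ _).trans hxE) hm
      exact ⟨y, hy1.trans hsub, hy2, lt_trans hy3 hstep⟩

/-- Assume genericity and `B > B* = max_{e ∈ E} ω(e)`.  If `x ⊆ E`
is not a matching of `G̃`, then there is a proper subset `y ⊊ x` which is a matching
of `G̃` and satisfies `H(y) < H(x)`. -/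
theorem non_matching_to_matching (B p q : ℝ) (hp : 1 ≤ p) (hq : 1 ≤ q)
    (X Y : Finset Pt) (hX : ∀ z ∈ X, z.1 < z.2) (hY : ∀ z ∈ Y, z.1 < z.2)
    (hgen : ∀ a ∈ X, ∀ b ∈ Y, a ≠ b)
    (hB : ∀ e ∈ edges X Y, edgeWeight p q e.1 e.2 < B)
    (x : Finset (Vtx × Vtx)) (hxE : x ⊆ edges X Y) (hnm : ¬ IsMatching x) :
    ∃ y, y ⊂ x ∧ IsMatching y ∧ Ham B p q X Y y < Ham B p q X Y x := by
  exact main_aux B p q hq X Y hX hY hgen hB x.card x le_rfl hxE hnm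
end

section
/- Assume B > B*. If y ⊆ E is a matching of G̃ which is not maximal, then there exists a maximal matching z of G̃ with y ⊊ z and H(z) < H(y). -/
open Finset

section Aux

lemma edgeWeight_nonneg (p q : ℝ) (u v : Vtx) : 0 ≤ edgeWeight p q u v :=
  Real.rpow_nonneg (Real.rpow_nonneg (by positivity) _) _

lemma isMatching_subset {x y : Finset (Vtx × Vtx)} (h : x ⊆ y) (hm : IsMatching y) :
    IsMatching x := fun e he e' he' hne => hm e (h he) e' (h he') hne

lemma indsum_insert (y : Finset (Vtx × Vtx)) (e : Vtx × Vtx) (hey : e ∉ y)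
    (s : Finset (Vtx × Vtx)) :
    (∑ e' ∈ s, (if e' ∈ insert e y then (1:ℝ) else 0)) =
      (∑ e' ∈ s, (if e' ∈ y then (1:ℝ) else 0)) + (if e ∈ s then 1 else 0) := by
  have h : ∀ e' ∈ s, (if e' ∈ insert e y then (1:ℝ) else 0) =
      (if e' ∈ y then (1:ℝ) else 0) + (if e' = e then (1:ℝ) else 0) := by
    intro e' _
    by_cases h1 : e' = e
    · subst h1; simp [hey]
    · simp [Finset.mem_insert, h1]
  rw [Finset.sum_congr rfl h, Finset.sum_add_distrib,
    Finset.sum_ite_eq' s e (fun _ => (1:ℝ))]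

lemma indsum_zero_fst (y : Finset (Vtx × Vtx)) (e : Vtx × Vtx) (hey : e ∉ y)
    (hm : IsMatching (insert e y)) (E : Finset (Vtx × Vtx)) (u : Vtx) (hu : e.1 = u) :
    (∑ e' ∈ E.filter (fun e' => e'.1 = u), (if e' ∈ y then (1:ℝ) else 0)) = 0 := by
  apply Finset.sum_eq_zero
  intro e' he'
  rw [Finset.mem_filter] at he'
  rw [if_neg]
  intro h
  have hne : e' ≠ e := fun heq => hey (heq ▸ h)
  exact (hm e' (Finset.mem_insert_of_mem h) e (Finset.mem_insert_self e y) hne).1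
    (he'.2.trans hu.symm)

lemma indsum_zero_snd (y : Finset (Vtx × Vtx)) (e : Vtx × Vtx) (hey : e ∉ y)
    (hm : IsMatching (insert e y)) (E : Finset (Vtx × Vtx)) (v : Vtx) (hv : e.2 = v) :
    (∑ e' ∈ E.filter (fun e' => e'.2 = v), (if e' ∈ y then (1:ℝ) else 0)) = 0 := by
  apply Finset.sum_eq_zero
  intro e' he'
  rw [Finset.mem_filter] at he'
  rw [if_neg]
  intro h
  have hne : e' ≠ e := fun heq => hey (heq ▸ h)
  exact (hm e' (Finset.mem_insert_of_mem h) e (Finset.mem_insert_self e y) hne).2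
    (he'.2.trans hv.symm)

lemma Fc_insert (p q : ℝ) (E y : Finset (Vtx × Vtx)) (e : Vtx × Vtx)
    (heE : e ∈ E) (hey : e ∉ y) :
    Fc p q E (insert e y) = Fc p q E y + edgeWeight p q e.1 e.2 := by
  unfold Fc
  have h : ∀ e' ∈ E, edgeWeight p q e'.1 e'.2 * (if e' ∈ insert e y then (1:ℝ) else 0) =
      edgeWeight p q e'.1 e'.2 * (if e' ∈ y then (1:ℝ) else 0) +
        (if e' = e then edgeWeight p q e'.1 e'.2 else 0) := by
    intro e' _
    by_cases h1 : e' = e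
    · subst h1; simp [hey]
    · simp [Finset.mem_insert, h1]
  rw [Finset.sum_congr rfl h, Finset.sum_add_distrib,
    Finset.sum_ite_eq' E e (fun e' => edgeWeight p q e'.1 e'.2), if_pos heE]

lemma FU_insert (B : ℝ) (X : Finset Pt) (E y : Finset (Vtx × Vtx)) (e : Vtx × Vtx)
    (heE : e ∈ E) (hey : e ∉ y) (hm : IsMatching (insert e y)) :
    FU B X E (insert e y) =
      FU B X E y - B * ∑ u ∈ X, (if e.1 = Sum.inl u then (1:ℝ) else 0) := by
  unfold FU
  rw [← mul_sub, ← Finset.sum_sub_distrib]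
  congr 1
  apply Finset.sum_congr rfl
  intro u _
  rw [indsum_insert y e hey]
  by_cases h1 : e.1 = Sum.inl u
  · rw [indsum_zero_fst y e hey hm E _ h1,
      if_pos (Finset.mem_filter.mpr ⟨heE, h1⟩), if_pos h1]
    norm_num
  · have hnf : e ∉ E.filter (fun e' => e'.1 = Sum.inl u) :=
      fun h => h1 (Finset.mem_filter.mp h).2
    rw [if_neg hnf, if_neg h1]
    ring

lemma FV_insert (B : ℝ) (Y : Finset Pt) (E y : Finset (Vtx × Vtx)) (e : Vtx × Vtx)
    (heE : e ∈ E) (hey : e ∉ y) (hm : IsMatching (insert e y)) :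
    FV B Y E (insert e y) =
      FV B Y E y - B * ∑ v ∈ Y, (if e.2 = Sum.inl v then (1:ℝ) else 0) := by
  unfold FV
  rw [← mul_sub, ← Finset.sum_sub_distrib]
  congr 1
  apply Finset.sum_congr rfl
  intro v _
  rw [indsum_insert y e hey]
  by_cases h1 : e.2 = Sum.inl v
  · rw [indsum_zero_snd y e hey hm E _ h1,
      if_pos (Finset.mem_filter.mpr ⟨heE, h1⟩), if_pos h1]
    norm_num
  · have hnf : e ∉ E.filter (fun e' => e'.2 = Sum.inl v) :=
      fun h => h1 (Finset.mem_filter.mp h).2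
    rw [if_neg hnf, if_neg h1]
    ring

lemma sum_ind_inl (X : Finset Pt) (a : Pt) (ha : a ∈ X) :
    ∑ u ∈ X, (if (Sum.inl a : Vtx) = Sum.inl u then (1:ℝ) else 0) = 1 := by
  have h : ∀ u ∈ X, (if (Sum.inl a : Vtx) = Sum.inl u then (1:ℝ) else 0) =
      (if a = u then (1:ℝ) else 0) := by
    intro u _; simp
  rw [Finset.sum_congr rfl h, Finset.sum_ite_eq X a (fun _ => (1:ℝ)), if_pos ha]

lemma sum_ind_inr (X : Finset Pt) (b : Pt) :
    ∑ u ∈ X, (if (Sum.inr b : Vtx) = Sum.inl u then (1:ℝ) else 0) = 0 := by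
  apply Finset.sum_eq_zero; intro u _; simp

lemma ham_step (B p q : ℝ) (X Y : Finset Pt)
    (hB : ∀ e ∈ edges X Y, edgeWeight p q e.1 e.2 < B)
    (y : Finset (Vtx × Vtx)) (e : Vtx × Vtx)
    (heE : e ∈ edges X Y) (hey : e ∉ y) (hm : IsMatching (insert e y)) :
    Ham B p q X Y (insert e y) < Ham B p q X Y y := by
  have hw : 0 ≤ edgeWeight p q e.1 e.2 := edgeWeight_nonneg p q e.1 e.2
  have hBe := hB e heE
  have hB0 : 0 < B := lt_of_le_of_lt hw hBe
  unfold Ham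
  rw [Fc_insert p q _ y e heE hey, FU_insert B X _ y e heE hey hm,
    FV_insert B Y _ y e heE hey hm]
  have hcase : 1 ≤ (∑ u ∈ X, (if e.1 = Sum.inl u then (1:ℝ) else 0)) +
      (∑ v ∈ Y, (if e.2 = Sum.inl v then (1:ℝ) else 0)) := by
    unfold edges at heE
    rcases Finset.mem_union.mp heE with h | h
    · rcases Finset.mem_union.mp h with h | h
      · obtain ⟨ab, hab, habe⟩ := Finset.mem_image.mp h
        obtain ⟨ha, hb⟩ := Finset.mem_product.mp hab
        rw [← habe]
        simp only
        rw [sum_ind_inl X ab.1 ha, sum_ind_inl Y ab.2 hb]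
        norm_num
      · obtain ⟨a, ha, hae⟩ := Finset.mem_image.mp h
        rw [← hae]
        simp only
        rw [sum_ind_inl X a ha, sum_ind_inr Y a]
        norm_num
    · obtain ⟨b, hb, hbe⟩ := Finset.mem_image.mp h
      rw [← hbe]
      simp only
      rw [sum_ind_inr X b, sum_ind_inl Y b hb]
      norm_num
  nlinarith [hcase, hB0, hBe]

lemma key_step (B p q : ℝ) (X Y : Finset Pt)
    (hB : ∀ e ∈ edges X Y, edgeWeight p q e.1 e.2 < B) :
    ∀ n (y : Finset (Vtx × Vtx)), (edges X Y \ y).card ≤ n →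
      y ⊆ edges X Y → IsMatching y → ¬ IsMaximalMatching (edges X Y) y →
      ∃ z, IsMaximalMatching (edges X Y) z ∧ y ⊂ z ∧
        Ham B p q X Y z < Ham B p q X Y y := by
  intro n
  induction n with
  | zero =>
    intro y hcard hyE hym hnm
    exfalso
    have hEy : edges X Y ⊆ y := by
      rw [← Finset.sdiff_eq_empty_iff_subset]
      exact Finset.card_eq_zero.mp (Nat.le_zero.mp hcard)
    exact hnm ⟨hyE, hym, fun y' hy'E _ hyy' =>
      Finset.Subset.antisymm hyy' (hy'E.trans hEy)⟩
  | succ n ih =>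
    intro y hcard hyE hym hnm
    have hnall : ¬ ∀ y', y' ⊆ edges X Y → IsMatching y' → y ⊆ y' → y = y' :=
      fun h => hnm ⟨hyE, hym, h⟩
    push_neg at hnall
    obtain ⟨y', hy'E, hy'm, hyy', hne⟩ := hnall
    obtain ⟨e, hey', hey⟩ := Finset.exists_of_ssubset (lt_of_le_of_ne hyy' hne)
    have heE : e ∈ edges X Y := hy'E hey'
    have hsub : insert e y ⊆ y' := Finset.insert_subset hey' hyy'
    have hm1 : IsMatching (insert e y) := isMatching_subset hsub hy'm
    have hlt := ham_step B p q X Y hB y e heE hey hm1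
    have hss : y ⊂ insert e y := Finset.ssubset_insert hey
    by_cases hmax : IsMaximalMatching (edges X Y) (insert e y)
    · exact ⟨insert e y, hmax, hss, hlt⟩
    · have hiE : insert e y ⊆ edges X Y := hsub.trans hy'E
      have hcard' : (edges X Y \ insert e y).card ≤ n := by
        rw [Finset.sdiff_insert]
        have heEy : e ∈ edges X Y \ y := Finset.mem_sdiff.mpr ⟨heE, hey⟩
        have := Finset.card_erase_of_mem heEy
        omega
      obtain ⟨z, hzmax, hzss, hzlt⟩ := ih (insert e y) hcard' hiE hm1 hmax
      exact ⟨z, hzmax, hss.trans hzss, hzlt.trans hlt⟩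

end Aux

/-- Assume `B > B* = max_{e ∈ E} ω(e)`.  If `y ⊆ E` is a matching
of `G̃` which is not maximal, then there exists a maximal matching `z` of `G̃` with
`y ⊊ z` and `H(z) < H(y)`. -/
theorem matching_to_maximal_matching (B p q : ℝ) (hp : 1 ≤ p) (hq : 1 ≤ q)
    (X Y : Finset Pt) (hX : ∀ z ∈ X, z.1 < z.2) (hY : ∀ z ∈ Y, z.1 < z.2)
    (hB : ∀ e ∈ edges X Y, edgeWeight p q e.1 e.2 < B)
    (y : Finset (Vtx × Vtx)) (hyE : y ⊆ edges X Y) (hym : IsMatching y)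
    (hnotmax : ¬ IsMaximalMatching (edges X Y) y) :
    ∃ z, IsMaximalMatching (edges X Y) z ∧ y ⊂ z ∧
      Ham B p q X Y z < Ham B p q X Y y :=
  key_step B p q X Y hB (edges X Y \ y).card y le_rfl hyE hym hnotmax
end
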